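/- arXiv:1610.03263 — 4 statements merged into one kernel-verified Lean document; each statement's English description precedes it below -/
import Mathlib

section
/- Let φ: [0,1] → ℝ be differentiable with φ'(c) > 0, and p a strictly positive probability density on [0,1] satisfying ∫₀¹ φ'(c) p(c) dc = φ(1) − φ(0). Then ∫₀¹ (1/φ'(c))² p(c) dc ≥ 1 / (φ(1) − φ(0))². -/
open MeasureTheory intervalIntegral Set

theorem inv_slope_sq_integral_ge
    (φ φ' p : ℝ → ℝ)
    (hderiv : ∀ c ∈ Icc (0:ℝ) 1, HasDerivAt φ (φ' c) c)
    (hφ'pos : ∀ c ∈ Icc (0:ℝ) 1, 0 < φ' c)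
    (hφ'cont : ContinuousOn φ' (Icc 0 1))
    (hpcont : ContinuousOn p (Icc 0 1))
    (hppos : ∀ c ∈ Icc (0:ℝ) 1, 0 < p c)
    (hpint : ∫ c in (0:ℝ)..1, p c = 1)
    (hindep : ∫ c in (0:ℝ)..1, φ' c * p c = φ 1 - φ 0) :
    (∫ c in (0:ℝ)..1, (1 / φ' c)^2 * p c) ≥ 1 / (φ 1 - φ 0)^2 := by
  have hIcc : uIcc (0:ℝ) 1 = Icc 0 1 := uIcc_of_le zero_le_one
  have hne : ∀ c ∈ Icc (0:ℝ) 1, φ' c ≠ 0 := fun c hc => (hφ'pos c hc).ne'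
  have hinv : ContinuousOn (fun c => 1 / φ' c) (Icc (0:ℝ) 1) :=
    continuousOn_const.div hφ'cont hne
  -- integrability lemmas
  have intOf : ∀ f : ℝ → ℝ, ContinuousOn f (Icc (0:ℝ) 1) →
      IntervalIntegrable f volume 0 1 := by
    intro f hf
    apply ContinuousOn.intervalIntegrable
    rwa [hIcc]
  have hIp : IntervalIntegrable p volume 0 1 := intOf p hpcont
  have hIφp : IntervalIntegrable (fun c => φ' c * p c) volume 0 1 :=
    intOf _ (hφ'cont.mul hpcont)
  have hIinvp : IntervalIntegrable (fun c => (1 / φ' c) * p c) volume 0 1 :=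
    intOf _ (hinv.mul hpcont)
  have hIinv2p : IntervalIntegrable (fun c => (1 / φ' c)^2 * p c) volume 0 1 :=
    intOf _ ((hinv.pow 2).mul hpcont)
  set M : ℝ := φ 1 - φ 0 with hM
  have hMpos : 0 < M := by
    rw [← hindep]
    apply intervalIntegral.intervalIntegral_pos_of_pos_on hIφp _ zero_lt_one
    intro x hx
    have hx' : x ∈ Icc (0:ℝ) 1 := ⟨hx.1.le, hx.2.le⟩
    exact mul_pos (hφ'pos x hx') (hppos x hx')
  have hMne : M ≠ 0 := hMpos.ne'
  set A : ℝ := ∫ c in (0:ℝ)..1, (1 / φ' c) * p c with hA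
  set B : ℝ := ∫ c in (0:ℝ)..1, (1 / φ' c)^2 * p c with hB
  -- Step 1: A ≥ 1/M
  have step1 : 1 / M ≤ A := by
    have h0 : 0 ≤ ∫ c in (0:ℝ)..1, (1 / φ' c - 1 / M)^2 * (φ' c * p c) := by
      apply intervalIntegral.integral_nonneg zero_le_one
      intro u hu
      exact mul_nonneg (sq_nonneg _)
        (mul_pos (hφ'pos u hu) (hppos u hu)).le
    have hexp : (∫ c in (0:ℝ)..1, (1 / φ' c - 1 / M)^2 * (φ' c * p c)) =
        A - (2 / M) * 1 + (1 / M^2) * M := by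
      have heq : EqOn (fun c => (1 / φ' c - 1 / M)^2 * (φ' c * p c))
          (fun c => (1 / φ' c) * p c - (2 / M) * p c + (1 / M^2) * (φ' c * p c))
          (uIcc (0:ℝ) 1) := by
        intro c hc
        rw [hIcc] at hc
        have h1 := hne c hc
        field_simp
        ring
      rw [intervalIntegral.integral_congr heq,
        intervalIntegral.integral_add ((hIinvp.sub (hIp.const_mul _)))
          (hIφp.const_mul _),
        intervalIntegral.integral_sub hIinvp (hIp.const_mul _),
        intervalIntegral.integral_const_mul, intervalIntegral.integral_const_mul,
        hpint, hindep]
    rw [hexp] at h0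
    have : (2 / M) * 1 - (1 / M^2) * M = 1 / M := by field_simp; ring
    linarith
  -- Step 2: B ≥ A^2
  have step2 : A^2 ≤ B := by
    have h0 : 0 ≤ ∫ c in (0:ℝ)..1, (1 / φ' c - A)^2 * p c := by
      apply intervalIntegral.integral_nonneg zero_le_one
      intro u hu
      exact mul_nonneg (sq_nonneg _) (hppos u hu).le
    have hexp : (∫ c in (0:ℝ)..1, (1 / φ' c - A)^2 * p c) =
        B - (2 * A) * A + (A^2) * 1 := by
      have heq : EqOn (fun c => (1 / φ' c - A)^2 * p c)
          (fun c => (1 / φ' c)^2 * p c - (2 * A) * ((1 / φ' c) * p c)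
            + (A^2) * p c) (uIcc (0:ℝ) 1) := by
        intro c hc
        simp only
        ring
      rw [intervalIntegral.integral_congr heq,
        intervalIntegral.integral_add ((hIinv2p.sub (hIinvp.const_mul _)))
          (hIp.const_mul _),
        intervalIntegral.integral_sub hIinv2p (hIinvp.const_mul _),
        intervalIntegral.integral_const_mul, intervalIntegral.integral_const_mul,
        hpint]
    rw [hexp] at h0
    nlinarith
  have hA2 : (1 / M)^2 ≤ A^2 := by
    have h1 : 0 < 1 / M := by positivity
    nlinarith
  have : 1 / M^2 = (1 / M)^2 := by field_simp
  rw [ge_iff_le, this]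
  linarith
end

section
/- Let φ: [0,1] → ℝ be differentiable with φ'(c) > 0, let p be a strictly positive probability density on [0,1] with ∫₀¹ φ'(c) p(c) dc = φ(1) − φ(0), and suppose φ(1) − φ(0) ≤ 1. Then ∫₀¹ (1/φ'(c))² p(c) dc ≥ 1. -/
open MeasureTheory intervalIntegral Set

theorem inv_slope_sq_integral_ge_one
    (φ φ' p : ℝ → ℝ)
    (hderiv : ∀ c ∈ Icc (0:ℝ) 1, HasDerivAt φ (φ' c) c)
    (hφ'pos : ∀ c ∈ Icc (0:ℝ) 1, 0 < φ' c)
    (hφ'cont : ContinuousOn φ' (Icc 0 1))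
    (hpcont : ContinuousOn p (Icc 0 1))
    (hppos : ∀ c ∈ Icc (0:ℝ) 1, 0 < p c)
    (hpint : ∫ c in (0:ℝ)..1, p c = 1)
    (hindep : ∫ c in (0:ℝ)..1, φ' c * p c = φ 1 - φ 0)
    (hrange : φ 1 - φ 0 ≤ 1) :
    (∫ c in (0:ℝ)..1, (1 / φ' c)^2 * p c) ≥ 1 := by
  set D := φ 1 - φ 0 with hD
  have h01 : (0:ℝ) ≤ 1 := by norm_num
  have huIcc : uIcc (0:ℝ) 1 = Icc 0 1 := uIcc_of_le h01
  have hint1 : IntervalIntegrable (fun c => φ' c * p c) volume 0 1 := by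
    apply ContinuousOn.intervalIntegrable
    rw [huIcc]; exact hφ'cont.mul hpcont
  have hintp : IntervalIntegrable p volume 0 1 := by
    apply ContinuousOn.intervalIntegrable
    rw [huIcc]; exact hpcont
  have hDpos : 0 < D := by
    rw [← hindep]
    apply intervalIntegral.intervalIntegral_pos_of_pos_on hint1
    · intro x hx
      have hx' : x ∈ Icc (0:ℝ) 1 := Ioo_subset_Icc_self hx
      exact mul_pos (hφ'pos x hx') (hppos x hx')
    · norm_num
  have hint2 : IntervalIntegrable (fun c => (1 / φ' c)^2 * p c) volume 0 1 := by
    apply ContinuousOn.intervalIntegrable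
    rw [huIcc]
    apply ContinuousOn.mul _ hpcont
    apply ContinuousOn.pow
    exact continuousOn_const.div hφ'cont (fun c hc => (hφ'pos c hc).ne')
  have hint3 : IntervalIntegrable (fun c => (3/D^2) * p c - (2/D^3) * (φ' c * p c))
      volume 0 1 := (hintp.const_mul _).sub (hint1.const_mul _)
  have key : ∀ c ∈ Icc (0:ℝ) 1,
      (3/D^2) * p c - (2/D^3) * (φ' c * p c) ≤ (1/φ' c)^2 * p c := by
    intro c hc
    have hx : 0 < φ' c := hφ'pos c hc
    have hp : 0 ≤ p c := (hppos c hc).le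
    have hptw : 3/D^2 - 2 * φ' c/D^3 ≤ (1/φ' c)^2 := by
      have hid : (1/φ' c)^2 - (3/D^2 - 2 * φ' c/D^3)
          = (D - φ' c)^2 * (D + 2 * φ' c) / ((φ' c)^2 * D^3) := by
        field_simp
        ring
      have hnn : 0 ≤ (D - φ' c)^2 * (D + 2 * φ' c) / ((φ' c)^2 * D^3) := by
        positivity
      linarith [hid ▸ hnn]
    calc (3/D^2) * p c - (2/D^3) * (φ' c * p c)
        = (3/D^2 - 2 * φ' c/D^3) * p c := by ring
      _ ≤ (1/φ' c)^2 * p c := by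
          exact mul_le_mul_of_nonneg_right hptw hp
  have hmono := intervalIntegral.integral_mono_on h01 hint3 hint2 key
  have hcalc : (∫ c in (0:ℝ)..1, ((3/D^2) * p c - (2/D^3) * (φ' c * p c)))
      = 1 / D^2 := by
    rw [intervalIntegral.integral_sub (hintp.const_mul _) (hint1.const_mul _),
      intervalIntegral.integral_const_mul, intervalIntegral.integral_const_mul,
      hpint, hindep]
    field_simp
    ring
  rw [hcalc] at hmono
  have : (1:ℝ) ≤ 1 / D^2 := by
    rw [le_div_iff₀ (by positivity)]
    nlinarith
  linarith
end

section
/- Error asymmetry theorem (approximate form): Let φ: [0,1] → ℝ be differentiable with φ'(c) > 0, p a strictly positive density on [0,1] with ∫₀¹ φ'(c)p(c)dc = φ(1) − φ(0) ≤ 1, and let σ² ≥ 0. Then the causal error E_{E|C} := σ² satisfies E_{E|C} ≤ E_{C|E} := σ² · ∫₀¹ (1/φ'(c))² p(c) dc. -/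
open MeasureTheory intervalIntegral Set

theorem error_asymmetry
    (φ φ' p : ℝ → ℝ)
    (hderiv : ∀ c ∈ Icc (0:ℝ) 1, HasDerivAt φ (φ' c) c)
    (hφ'pos : ∀ c ∈ Icc (0:ℝ) 1, 0 < φ' c)
    (hφ'cont : ContinuousOn φ' (Icc 0 1))
    (hpcont : ContinuousOn p (Icc 0 1))
    (hppos : ∀ c ∈ Icc (0:ℝ) 1, 0 < p c)
    (hpint : ∫ c in (0:ℝ)..1, p c = 1)
    (hindep : ∫ c in (0:ℝ)..1, φ' c * p c = φ 1 - φ 0)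
    (hrange : φ 1 - φ 0 ≤ 1)
    (σ2 : ℝ) (hσ2 : 0 ≤ σ2) :
    σ2 ≤ σ2 * ∫ c in (0:ℝ)..1, (1 / φ' c)^2 * p c := by
  have h01 : (0:ℝ) ≤ 1 := zero_le_one
  have hφ'ne : ∀ c ∈ Icc (0:ℝ) 1, φ' c ≠ 0 := fun c hc => (hφ'pos c hc).ne'
  have hinv : ContinuousOn (fun c => 1 / φ' c) (Icc 0 1) :=
    continuousOn_const.div hφ'cont hφ'ne
  have ip : IntervalIntegrable p volume 0 1 := hpcont.intervalIntegrable_of_Icc h01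
  have i1 : IntervalIntegrable (fun c => φ' c * p c) volume 0 1 :=
    (hφ'cont.mul hpcont).intervalIntegrable_of_Icc h01
  have i2 : IntervalIntegrable (fun c => (1 / φ' c) * p c) volume 0 1 :=
    (hinv.mul hpcont).intervalIntegrable_of_Icc h01
  have i3 : IntervalIntegrable (fun c => (1 / φ' c)^2 * p c) volume 0 1 :=
    ((hinv.pow 2).mul hpcont).intervalIntegrable_of_Icc h01
  have hI2 : (1:ℝ) ≤ ∫ c in (0:ℝ)..1, (1 / φ' c) * p c := by
    have key : (2:ℝ) ≤ ∫ c in (0:ℝ)..1, (φ' c * p c + (1 / φ' c) * p c) := by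
      have h2 : (2:ℝ) = ∫ c in (0:ℝ)..1, 2 * p c := by
        rw [intervalIntegral.integral_const_mul, hpint]; ring
      rw [h2]
      apply intervalIntegral.integral_mono_on h01 (ip.const_mul 2) (i1.add i2)
      intro c hc
      have hx := hφ'pos c hc
      have hp := hppos c hc
      have hxy : φ' c * (1 / φ' c) = 1 := mul_one_div_cancel (hφ'ne c hc)
      have hnn : 0 ≤ p c * (1 / φ' c) * (φ' c - 1)^2 := by positivity
      nlinarith [hnn, hxy, hp, hx]
    have hsplit : (∫ c in (0:ℝ)..1, (φ' c * p c + (1 / φ' c) * p c))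
        = (∫ c in (0:ℝ)..1, φ' c * p c) + ∫ c in (0:ℝ)..1, (1 / φ' c) * p c :=
      intervalIntegral.integral_add i1 i2
    rw [hsplit, hindep] at key
    linarith
  have hI3 : (1:ℝ) ≤ ∫ c in (0:ℝ)..1, (1 / φ' c)^2 * p c := by
    have key : (∫ c in (0:ℝ)..1, (2 * ((1 / φ' c) * p c) - p c))
        ≤ ∫ c in (0:ℝ)..1, (1 / φ' c)^2 * p c := by
      apply intervalIntegral.integral_mono_on h01 ((i2.const_mul 2).sub ip) i3
      intro c hc
      nlinarith [mul_nonneg (hppos c hc).le (sq_nonneg (1 / φ' c - 1))]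
    have hsplit : (∫ c in (0:ℝ)..1, (2 * ((1 / φ' c) * p c) - p c))
        = 2 * (∫ c in (0:ℝ)..1, (1 / φ' c) * p c) - ∫ c in (0:ℝ)..1, p c := by
      rw [intervalIntegral.integral_sub (i2.const_mul 2) ip,
        intervalIntegral.integral_const_mul]
    rw [hsplit, hpint] at key
    linarith
  nlinarith [hI3, hσ2]
end

section
/- Let φ: [0,1] → ℝ be differentiable with φ'(c) > 0, p a strictly positive probability density with ∫₀¹ φ'(c)p(c)dc = φ(1) − φ(0), and suppose φ(1) − φ(0) < 1. Then for any σ² > 0, σ² < σ² · ∫₀¹ (1/φ'(c))² p(c) dc; i.e., the causal error is strictly smaller than the anticausal error. -/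
open MeasureTheory intervalIntegral Set

theorem error_asymmetry_strict
    (φ φ' p : ℝ → ℝ)
    (hderiv : ∀ c ∈ Icc (0:ℝ) 1, HasDerivAt φ (φ' c) c)
    (hφ'pos : ∀ c ∈ Icc (0:ℝ) 1, 0 < φ' c)
    (hφ'cont : ContinuousOn φ' (Icc 0 1))
    (hpcont : ContinuousOn p (Icc 0 1))
    (hppos : ∀ c ∈ Icc (0:ℝ) 1, 0 < p c)
    (hpint : ∫ c in (0:ℝ)..1, p c = 1)
    (hindep : ∫ c in (0:ℝ)..1, φ' c * p c = φ 1 - φ 0)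
    (hrange : φ 1 - φ 0 < 1)
    (σ2 : ℝ) (hσ2 : 0 < σ2) :
    σ2 < σ2 * ∫ c in (0:ℝ)..1, (1 / φ' c)^2 * p c := by
  have huIcc : uIcc (0:ℝ) 1 = Icc 0 1 := uIcc_of_le zero_le_one
  have hφ'ne : ∀ c ∈ Icc (0:ℝ) 1, φ' c ≠ 0 := fun c hc => (hφ'pos c hc).ne'
  have hcont1 : ContinuousOn (fun c => (1 / φ' c)^2 * p c) (Icc (0:ℝ) 1) := by
    exact (((continuousOn_const.div hφ'cont hφ'ne).pow 2).mul hpcont)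
  have hcont2 : ContinuousOn (fun c => (3 - 2 * φ' c) * p c) (Icc (0:ℝ) 1) := by
    exact ((continuousOn_const.sub (continuousOn_const.mul hφ'cont)).mul hpcont)
  have hint1 : IntervalIntegrable (fun c => (1 / φ' c)^2 * p c) volume 0 1 :=
    (hcont1.mono (by rw [huIcc])).intervalIntegrable
  have hint2 : IntervalIntegrable (fun c => (3 - 2 * φ' c) * p c) volume 0 1 :=
    (hcont2.mono (by rw [huIcc])).intervalIntegrable
  have hintp : IntervalIntegrable p volume 0 1 :=
    (hpcont.mono (by rw [huIcc])).intervalIntegrable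
  have hintφp : IntervalIntegrable (fun c => φ' c * p c) volume 0 1 :=
    ((hφ'cont.mul hpcont).mono (by rw [huIcc])).intervalIntegrable
  have hmono : ∫ c in (0:ℝ)..1, (3 - 2 * φ' c) * p c ≤
      ∫ c in (0:ℝ)..1, (1 / φ' c)^2 * p c := by
    apply integral_mono_on zero_le_one hint2 hint1
    intro c hc
    have hx := hφ'pos c hc
    have hp := (hppos c hc).le
    have key : 3 - 2 * φ' c ≤ (1 / φ' c)^2 := by
      rw [div_pow, one_pow, le_div_iff₀ (by positivity)]
      nlinarith [sq_nonneg (1 - φ' c), sq_nonneg (φ' c)]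
    exact mul_le_mul_of_nonneg_right key hp
  have hsplit : ∫ c in (0:ℝ)..1, (3 - 2 * φ' c) * p c
      = 3 * (∫ c in (0:ℝ)..1, p c) - 2 * ∫ c in (0:ℝ)..1, φ' c * p c := by
    rw [← intervalIntegral.integral_const_mul, ← intervalIntegral.integral_const_mul,
      ← intervalIntegral.integral_sub (hintp.const_mul 3) (hintφp.const_mul 2)]
    congr 1; ext c; ring
  have hI : 1 < ∫ c in (0:ℝ)..1, (1 / φ' c)^2 * p c := by
    rw [hsplit, hpint, hindep] at hmono
    linarith
  nlinarith
end
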